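/- Let d ≥ 2 and let P ⊆ ℝ^d be a d-dimensional centrally-symmetric lattice polytope with P°_ℤ = {0} and |P_ℤ| = 3^d. Let F be a facet of P with a lattice point x in its relative interior, and let u_F ∈ (ℚ^d)* be the outer normal of F normalized by u_F(F) = {1} and u_F(P) ⊆ (−∞,1]. Then P_ℤ is the disjoint union of F_ℤ, P_ℤ ∩ u_F^⊥, and −F_ℤ; the map y ↦ x + y induces bijections (−F_ℤ) → (P_ℤ ∩ u_F^⊥) and (P_ℤ ∩ u_F^⊥) → F_ℤ; and every vertex of P lies in F_ℤ ∪ (−F_ℤ). -/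

import Mathlib

open Set

noncomputable section

/-- Coordinatewise cast of an integer vector into `ℝ^d`. -/
def ic {d : ℕ} (v : Fin d → ℤ) : Fin d → ℝ := fun i => (v i : ℝ)

/-- `P_ℤ`: the set of lattice points of `ℤ^d` lying in `P`. -/
def latticePts {d : ℕ} (P : Set (Fin d → ℝ)) : Set (Fin d → ℤ) := {x | ic x ∈ P}

/-- `P°_ℤ`: the set of lattice points of `ℤ^d` lying in the relative interior of `P`. -/
def relintLatticePts {d : ℕ} (P : Set (Fin d → ℝ)) : Set (Fin d → ℤ) :=
  {x | ic x ∈ intrinsicInterior ℝ P}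

/-- `P` is a lattice polytope: the convex hull of finitely many points of `ℤ^d`. -/
def IsLatticePolytope {d : ℕ} (P : Set (Fin d → ℝ)) : Prop :=
  ∃ V : Finset (Fin d → ℤ), P = convexHull ℝ (ic '' ↑V)

/-- `F` is a face of the convex set `P`: a convex extreme subset of `P`. -/
def IsFaceOf {d : ℕ} (P F : Set (Fin d → ℝ)) : Prop :=
  IsExtreme ℝ P F ∧ Convex ℝ F

/-! The reduction of `P_ℤ` modulo 3 is injective (two congruent lattice points `y ≠ z` would put
the lattice point `(y - z) / 3 ≠ 0` in the interior of `P`), hence bijective onto `(ℤ/3)^d`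
since `|P_ℤ| = 3^d`. So for `y ∈ P_ℤ` there is `z ∈ P_ℤ` with `z ≡ y + x (mod 3)`, and
`w = (z - y - x) / 3 ∈ P`. If `y + x ∉ P_ℤ` then `w ≠ 0` lies on the boundary of `P`, and a
supporting functional at `w` is maximised over `P = -P` at both `-x` and `-y`; since `F` is a
facet through `x`, this forces `y ∈ F`. Hence `P_ℤ \ F` is mapped into `P_ℤ` by `y ↦ y + x`,
which raises `u_F` by one; with `u_F ≤ 1` on `P = -P` this leaves only the levels `-1, 0, 1`.
A vertex `v` at level `0` would be the midpoint of `v ± x ∈ P`. -/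

open Module Topology

section ConvexGeometry

variable {E : Type*} [NormedAddCommGroup E] [NormedSpace ℝ E]

theorem intrinsicInterior_eq_interior_of_affineSpan_eq_top {s : Set E}
    (h : affineSpan ℝ s = ⊤) : intrinsicInterior ℝ s = interior s := by
  refine interior_subset_intrinsicInterior.antisymm' ?_
  have hopen : IsOpen (affineSpan ℝ s : Set E) := by simp [h]
  refine interior_maximal ?_ (hopen.isOpenMap_subtype_val _ isOpen_interior)
  rintro _ ⟨q, hq, rfl⟩
  exact mem_preimage.mp (interior_subset hq)

theorem exists_mem_openSegment_of_mem_intrinsicInterior {F : Set E} {x g : E}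
    (hx : x ∈ intrinsicInterior ℝ F) (hg : g ∈ affineSpan ℝ F) :
    ∃ p ∈ F, x ∈ openSegment ℝ p g := by
  obtain ⟨y, hy, rfl⟩ := hx
  let c : ℝ → affineSpan ℝ F := fun t =>
    ⟨t • ((y : E) -ᵥ g) +ᵥ (y : E), AffineSubspace.smul_vsub_vadd_mem _ t y.2 hg y.2⟩
  have hc : Continuous c := by fun_prop
  have hnear : ∀ᶠ t in 𝓝[>] (0 : ℝ), c t ∈ interior (((↑) : affineSpan ℝ F → E) ⁻¹' F) :=
    nhdsWithin_le_nhds <| hc.continuousAt.preimage_mem_nhds <|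
      isOpen_interior.mem_nhds (by simpa [c] using hy)
  obtain ⟨t, hct, ht⟩ := (hnear.and self_mem_nhdsWithin).exists
  refine ⟨c t, mem_preimage.mp (interior_subset hct), 1 / (1 + t), t / (1 + t), by positivity,
    div_pos ht (by positivity), by field_simp, ?_⟩
  have : 1 + t ≠ 0 := by positivity
  simp only [c, vsub_eq_sub, vadd_eq_add]
  match_scalars <;> field_simp <;> ring

theorem IsExtreme.mem_of_mem_affineSpan {P F : Set E} (hF : IsExtreme ℝ P F) {x g : E}
    (hx : x ∈ intrinsicInterior ℝ F) (hgP : g ∈ P) (hg : g ∈ affineSpan ℝ F) : g ∈ F := by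
  obtain ⟨p, hp, hxpg⟩ := exists_mem_openSegment_of_mem_intrinsicInterior hx hg
  exact hF.right_mem_of_mem_openSegment (hF.subset hp) hgP (intrinsicInterior_subset hx) hxpg

theorem IsExtreme.subset_of_mem_intrinsicInterior {P F K : Set E} (hK : IsExtreme ℝ P K)
    (hFP : F ⊆ P) {x : E} (hx : x ∈ intrinsicInterior ℝ F) (hxK : x ∈ K) : F ⊆ K := by
  intro g hg
  obtain ⟨p, hp, hxpg⟩ :=
    exists_mem_openSegment_of_mem_intrinsicInterior hx (subset_affineSpan ℝ F hg)
  exact hK.right_mem_of_mem_openSegment (hFP hp) (hFP hg) hxK hxpg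

/-- The extreme set `F` lies in the exposed face cut out by `f`; comparing dimensions, the
direction of `F` is all of `ker f`, so that face lies in the affine span of `F`. -/
theorem IsExtreme.eq_sep_apply_eq_of_finrank_vectorSpan [FiniteDimensional ℝ E] {P F : Set E}
    (hF : IsExtreme ℝ P F) (hfacet : finrank ℝ (vectorSpan ℝ F) = finrank ℝ E - 1) {x : E}
    (hx : x ∈ intrinsicInterior ℝ F) {f : StrongDual ℝ E} (hf : f ≠ 0)
    (hle : ∀ p ∈ P, f p ≤ f x) : F = {p ∈ P | f p = f x} := by
  have hxF : x ∈ F := intrinsicInterior_subset hx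
  have hFK : F ⊆ f.toExposed P :=
    ContinuousLinearMap.toExposed.isExposed.isExtreme.subset_of_mem_intrinsicInterior
      hF.subset hx ⟨hF.subset hxF, hle⟩
  have hFx (p : E) (hp : p ∈ F) : f p = f x :=
    ((hFK hp).2 x (hF.subset hxF)).antisymm' (hle p (hF.subset hp))
  have hker : vectorSpan ℝ F = LinearMap.ker (f : E →ₗ[ℝ] ℝ) := by
    refine Submodule.eq_of_le_of_finrank_eq ?_ ?_
    · rw [vectorSpan_def, Submodule.span_le]
      rintro _ ⟨p, hp, q, hq, rfl⟩
      simp [hFx p hp, hFx q hq]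
    · have := Module.Dual.finrank_ker_add_one_of_ne_zero
        (ContinuousLinearMap.coe_injective.ne hf : (f : E →ₗ[ℝ] ℝ) ≠ 0)
      omega
  refine Subset.antisymm (fun p hp => ⟨hF.subset hp, hFx p hp⟩) fun g ⟨hgP, hgx⟩ => ?_
  refine hF.mem_of_mem_affineSpan hx hgP ?_
  have hdir : g -ᵥ x ∈ (affineSpan ℝ F).direction := by
    simp [direction_affineSpan, hker, hgx]
  simpa using AffineSubspace.vadd_mem_of_mem_direction hdir (subset_affineSpan ℝ F hxF)

theorem Convex.exists_forall_le_of_notMem_interior {P : Set E} (hP : Convex ℝ P)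
    (hne : (interior P).Nonempty) {w : E} (hw : w ∉ interior P) :
    ∃ f : StrongDual ℝ E, (∀ p ∈ interior P, f p < f w) ∧ ∀ p ∈ P, f p ≤ f w := by
  obtain ⟨f, hf⟩ := geometric_hahn_banach_open_point hP.interior isOpen_interior hw
  refine ⟨f, hf, fun p hp => ?_⟩
  have hcl : closure (interior P) ⊆ {q | f q ≤ f w} :=
    closure_minimal (fun q hq => (hf q hq).le) (isClosed_le f.continuous continuous_const)
  exact hcl (hP.closure_interior_eq_closure_of_nonempty_interior hne ▸ subset_closure hp)

theorem eq_zero_of_add_mem_of_sub_mem_of_mem_extremePoints {A : Set E} {p v : E}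
    (hp : p ∈ A.extremePoints ℝ) (hadd : p + v ∈ A) (hsub : p - v ∈ A) : v = 0 := by
  have hseg : p ∈ openSegment ℝ (p - v) (p + v) :=
    ⟨1 / 2, 1 / 2, by norm_num, by norm_num, by norm_num, by module⟩
  simpa using hp.2 hsub hadd hseg

end ConvexGeometry

section Levels

variable {G : Type*} [AddCommGroup G] {S : Set G} {ℓ : G →+ ℝ} {x : G}

theorem neg_sep_apply_eq (hneg : ∀ y ∈ S, -y ∈ S) (t : ℝ) :
    -{y ∈ S | ℓ y = t} = {y ∈ S | ℓ y = -t} := by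
  ext y
  simp only [mem_neg, mem_sep_iff, map_neg, neg_eq_iff_eq_neg]
  exact and_congr_left fun _ => ⟨fun h => by simpa using hneg _ h, hneg y⟩

theorem apply_eq_one_or_eq_zero_or_eq_neg_one (hneg : ∀ y ∈ S, -y ∈ S)
    (hle : ∀ y ∈ S, ℓ y ≤ 1) (hx : ℓ x = 1) (hstep : ∀ y ∈ S, ℓ y ≠ 1 → y + x ∈ S)
    {y : G} (hy : y ∈ S) : ℓ y = 1 ∨ ℓ y = 0 ∨ ℓ y = -1 := by
  by_cases h₁ : ℓ y = 1
  · exact Or.inl h₁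
  by_cases h₂ : ℓ y = -1
  · exact Or.inr (Or.inr h₂)
  have hup := hle _ (hstep y hy h₁)
  have hdown := hle _ (hstep (-y) (hneg y hy) (by rw [map_neg]; contrapose! h₂; linarith))
  simp only [map_add, map_neg, hx] at hup hdown
  exact Or.inr (Or.inl (by linarith))

theorem eq_union_sep_apply_eq (hneg : ∀ y ∈ S, -y ∈ S) (hle : ∀ y ∈ S, ℓ y ≤ 1)
    (hx : ℓ x = 1) (hstep : ∀ y ∈ S, ℓ y ≠ 1 → y + x ∈ S) :
    S = {y ∈ S | ℓ y = 1} ∪ {y ∈ S | ℓ y = 0} ∪ {y ∈ S | ℓ y = -1} := by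
  ext y
  refine ⟨fun hy => ?_, by rintro ((⟨hy, -⟩ | ⟨hy, -⟩) | ⟨hy, -⟩) <;> exact hy⟩
  rcases apply_eq_one_or_eq_zero_or_eq_neg_one hneg hle hx hstep hy with h | h | h
  exacts [Or.inl (Or.inl ⟨hy, h⟩), Or.inl (Or.inr ⟨hy, h⟩), Or.inr ⟨hy, h⟩]

theorem sub_mem_of_apply_ne_neg_one (hneg : ∀ y ∈ S, -y ∈ S)
    (hstep : ∀ y ∈ S, ℓ y ≠ 1 → y + x ∈ S) {y : G} (hy : y ∈ S) (h : ℓ y ≠ -1) : y - x ∈ S := by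
  have hmy : ℓ (-y) ≠ 1 := by
    rw [map_neg]; contrapose! h; linarith
  simpa [neg_add_eq_sub] using hneg _ (hstep (-y) (hneg y hy) hmy)

theorem bijOn_add_sep_apply_eq (hneg : ∀ y ∈ S, -y ∈ S) (hx : ℓ x = 1)
    (hstep : ∀ y ∈ S, ℓ y ≠ 1 → y + x ∈ S) {t : ℝ} (ht₁ : t ≠ 1) (ht₂ : t ≠ -2) :
    BijOn (x + ·) {y ∈ S | ℓ y = t} {y ∈ S | ℓ y = t + 1} := by
  refine ⟨fun y ⟨hy, hyt⟩ => ?_, fun y _ z _ h => add_left_cancel h, fun z ⟨hz, hzt⟩ => ?_⟩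
  · show x + y ∈ _
    rw [add_comm x y]
    exact ⟨hstep y hy (hyt ▸ ht₁), by rw [map_add, hyt, hx]⟩
  · refine ⟨z - x, ⟨sub_mem_of_apply_ne_neg_one hneg hstep hz ?_, by rw [map_sub, hzt, hx]; ring⟩,
      add_sub_cancel x z⟩
    rw [hzt]; contrapose! ht₂; linarith

end Levels

theorem Set.InjOn.image_eq_univ_of_ncard_eq {α β : Type*} [Finite β] {s : Set α} {f : α → β}
    (hf : InjOn f s) (hs : s.ncard = Nat.card β) : f '' s = univ :=
  eq_of_subset_of_ncard_le (subset_univ _) (by rw [ncard_univ, hf.ncard_image, hs])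

section LatticePoints

variable {d : ℕ}

theorem ic_zero : ic (0 : Fin d → ℤ) = 0 := by
  funext i; simp [ic]

theorem ic_add (a b : Fin d → ℤ) : ic (a + b) = ic a + ic b := by
  funext i; simp [ic]

theorem ic_neg (a : Fin d → ℤ) : ic (-a) = -ic a := by
  funext i; simp [ic]

theorem ic_sub (a b : Fin d → ℤ) : ic (a - b) = ic a - ic b := by
  funext i; simp [ic]

theorem ic_zsmul (n : ℤ) (a : Fin d → ℤ) : ic (n • a) = (n : ℝ) • ic a := by
  funext i; simp [ic]

theorem ic_injective : Function.Injective (ic : (Fin d → ℤ) → Fin d → ℝ) :=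
  fun _ _ h => funext fun i => Int.cast_injective (congrFun h i)

theorem exists_eq_add_three_smul_of_castZMod_eq {y z : Fin d → ℤ}
    (h : (fun i => (y i : ZMod 3)) = fun i => (z i : ZMod 3)) : ∃ w, y = z + (3 : ℤ) • w := by
  have hdvd (i : Fin d) : (3 : ℤ) ∣ y i - z i :=
    (ZMod.intCast_eq_intCast_iff_dvd_sub _ _ 3).mp (congrFun h i).symm
  choose w hw using hdvd
  refine ⟨w, funext fun i => ?_⟩
  simp only [Pi.add_apply, Pi.smul_apply, smul_eq_mul]
  linarith [hw i]

variable {P : Set (Fin d → ℝ)}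

theorem IsLatticePolytope.convex (hP : IsLatticePolytope P) : Convex ℝ P := by
  obtain ⟨V, rfl⟩ := hP
  exact convex_convexHull ℝ _

theorem IsLatticePolytope.exists_ic_eq_of_mem_extremePoints (hP : IsLatticePolytope P)
    {p : Fin d → ℝ} (hp : p ∈ P.extremePoints ℝ) : ∃ z, ic z = p := by
  obtain ⟨V, rfl⟩ := hP
  obtain ⟨z, -, hz⟩ := extremePoints_convexHull_subset hp
  exact ⟨z, hz⟩

theorem ic_mem_interior_iff_of_relintLatticePts_eq (hdim : affineSpan ℝ P = ⊤)
    (hint : relintLatticePts P = {0}) (z : Fin d → ℤ) : ic z ∈ interior P ↔ z = 0 := by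
  rw [← intrinsicInterior_eq_interior_of_affineSpan_eq_top hdim]
  exact Set.ext_iff.mp hint z

theorem neg_mem_latticePts (hsym : P = -P) {y : Fin d → ℤ} (hy : y ∈ latticePts P) :
    -y ∈ latticePts P := by
  show ic (-y) ∈ P
  rw [ic_neg, hsym, neg_mem_neg]
  exact hy

theorem injOn_castZMod_three_latticePts (hP : Convex ℝ P) (hsym : P = -P)
    (hint : ∀ z : Fin d → ℤ, ic z ∈ interior P ↔ z = 0) :
    InjOn (fun z i => (z i : ZMod 3)) (latticePts P) := by
  intro y hy z hz h
  obtain ⟨w, rfl⟩ := exists_eq_add_three_smul_of_castZMod_eq h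
  have hmid := hP hy (neg_mem_latticePts hsym hz) (a := 1 / 2) (b := 1 / 2) (by norm_num)
    (by norm_num) (by norm_num)
  have hw : ic w ∈ interior P := by
    have := hP.combo_interior_self_mem_interior ((hint 0).2 rfl) hmid
      (a := 1 / 3) (b := 2 / 3) (by norm_num) (by norm_num) (by norm_num)
    convert this using 1
    simp only [ic_add, ic_neg, ic_zsmul, ic_zero]
    module
  simp [(hint w).1 hw]

theorem exists_supporting_of_add_notMem_latticePts (hP : Convex ℝ P) (hsym : P = -P)
    (hint : ∀ z : Fin d → ℤ, ic z ∈ interior P ↔ z = 0) (hcard : (latticePts P).ncard = 3 ^ d)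
    {x y : Fin d → ℤ} (hx : x ∈ latticePts P) (hy : y ∈ latticePts P)
    (hyx : y + x ∉ latticePts P) :
    ∃ f : StrongDual ℝ (Fin d → ℝ), f ≠ 0 ∧ (∀ p ∈ P, f p ≤ f (ic x)) ∧ f (ic y) = f (ic x) := by
  have hsurj := (injOn_castZMod_three_latticePts hP hsym hint).image_eq_univ_of_ncard_eq
    (by simp [hcard])
  obtain ⟨z, hz, hzyx⟩ := hsurj.symm ▸ mem_univ (fun i => ((y + x) i : ZMod 3))
  obtain ⟨w, rfl⟩ := exists_eq_add_three_smul_of_castZMod_eq hzyx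
  have hw0 : w ≠ 0 := by
    rintro rfl
    exact hyx (by simpa using hz)
  have hwP : ic w ∈ P := by
    have hmid := hP (neg_mem_latticePts hsym hy) (neg_mem_latticePts hsym hx)
      (a := 1 / 2) (b := 1 / 2) (by norm_num) (by norm_num) (by norm_num)
    convert hP hz hmid (a := 1 / 3) (b := 2 / 3) (by norm_num) (by norm_num) (by norm_num)
      using 1
    simp only [ic_add, ic_neg, ic_zsmul]
    module
  have h0 : (0 : Fin d → ℝ) ∈ interior P := ic_zero (d := d) ▸ (hint 0).2 rfl
  obtain ⟨f, hf_int, hf_le⟩ :=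
    hP.exists_forall_le_of_notMem_interior ⟨0, h0⟩ fun h => hw0 ((hint w).1 h)
  have hfw : 0 < f (ic w) := by simpa using hf_int 0 h0
  have hfz := hf_le _ hz
  have hfy := hf_le _ (neg_mem_latticePts hsym hy)
  have hfx := hf_le _ (neg_mem_latticePts hsym hx)
  simp only [ic_add, ic_neg, ic_zsmul, map_add, map_neg, map_smul, smul_eq_mul] at hfz hfy hfx
  push_cast at hfz
  have hxw : -f (ic x) = f (ic w) := by linarith
  have hyw : -f (ic y) = f (ic w) := by linarith
  refine ⟨-f, neg_ne_zero.2 fun h => by simp [h] at hfw, fun p hp => ?_, by simp [hxw, hyw]⟩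
  have hfp := hf_le (-p) (by rw [hsym]; exact neg_mem_neg.2 hp)
  rw [map_neg] at hfp
  show -f p ≤ -f (ic x)
  linarith

theorem add_mem_latticePts_of_notMem_facet (hP : Convex ℝ P) (hsym : P = -P)
    (hint : ∀ z : Fin d → ℤ, ic z ∈ interior P ↔ z = 0) (hcard : (latticePts P).ncard = 3 ^ d)
    {F : Set (Fin d → ℝ)} (hF : IsExtreme ℝ P F)
    (hfacet : finrank ℝ (vectorSpan ℝ F) = d - 1) {x : Fin d → ℤ}
    (hx : ic x ∈ intrinsicInterior ℝ F) {y : Fin d → ℤ} (hy : y ∈ latticePts P)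
    (hyF : ic y ∉ F) : y + x ∈ latticePts P := by
  by_contra hyx
  obtain ⟨f, hf, hle, hfy⟩ := exists_supporting_of_add_notMem_latticePts hP hsym hint hcard
    (hF.subset (intrinsicInterior_subset hx)) hy hyx
  rw [hF.eq_sep_apply_eq_of_finrank_vectorSpan (by rw [hfacet, finrank_fin_fun]) hx hf hle]
    at hyF
  exact hyF ⟨hy, hfy⟩

theorem apply_eq_one_or_eq_neg_one_of_ic_mem_extremePoints {ℓ : (Fin d → ℤ) →+ ℝ}
    {x : Fin d → ℤ} (hneg : ∀ y ∈ latticePts P, -y ∈ latticePts P)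
    (hle : ∀ y ∈ latticePts P, ℓ y ≤ 1) (hx : ℓ x = 1)
    (hstep : ∀ y ∈ latticePts P, ℓ y ≠ 1 → y + x ∈ latticePts P) {z : Fin d → ℤ}
    (hz : ic z ∈ P.extremePoints ℝ) : ℓ z = 1 ∨ ℓ z = -1 := by
  have hzP : z ∈ latticePts P := (extremePoints_subset hz : ic z ∈ P)
  refine (apply_eq_one_or_eq_zero_or_eq_neg_one hneg hle hx hstep hzP).imp_right
    (Or.resolve_left · fun h => ?_)
  have hx0 := eq_zero_of_add_mem_of_sub_mem_of_mem_extremePoints hz (v := ic x)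
    (ic_add z x ▸ hstep z hzP (by rw [h]; norm_num))
    (ic_sub z x ▸ sub_mem_of_apply_ne_neg_one hneg hstep hzP (by rw [h]; norm_num))
  simp [ic_injective (hx0.trans ic_zero.symm)] at hx

end LatticePoints

theorem facet_layer_structure_general {d : ℕ} (P : Set (Fin d → ℝ))
    (hpoly : IsLatticePolytope P) (hdim : affineSpan ℝ P = ⊤)
    (hsym : P = -P) (hint : relintLatticePts P = {0})
    (hcard : (latticePts P).ncard = 3 ^ d)
    (F : Set (Fin d → ℝ)) (hF : IsFaceOf P F)
    (hfacet : Module.finrank ℝ (vectorSpan ℝ F) = d - 1)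
    (x : Fin d → ℤ) (hx : ic x ∈ intrinsicInterior ℝ F)
    (u : Fin d → ℚ)
    (huF : ∀ p ∈ F, ∑ i, (u i : ℝ) * p i = 1)
    (huP : ∀ p ∈ P, ∑ i, (u i : ℝ) * p i ≤ 1) :
    latticePts P =
        latticePts F ∪ {y ∈ latticePts P | ∑ i, (u i : ℝ) * (y i : ℝ) = 0} ∪
          (-(latticePts F)) ∧
    Disjoint (latticePts F) {y ∈ latticePts P | ∑ i, (u i : ℝ) * (y i : ℝ) = 0} ∧
    Disjoint {y ∈ latticePts P | ∑ i, (u i : ℝ) * (y i : ℝ) = 0} (-(latticePts F)) ∧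
    Disjoint (latticePts F) (-(latticePts F)) ∧
    Set.BijOn (fun y => x + y) (-(latticePts F))
      {y ∈ latticePts P | ∑ i, (u i : ℝ) * (y i : ℝ) = 0} ∧
    Set.BijOn (fun y => x + y)
      {y ∈ latticePts P | ∑ i, (u i : ℝ) * (y i : ℝ) = 0} (latticePts F) ∧
    ∀ p ∈ Set.extremePoints ℝ P, (∃ z : Fin d → ℤ, ic z = p) ∧ (p ∈ F ∨ -p ∈ F) := by
  let L : StrongDual ℝ (Fin d → ℝ) :=
    LinearMap.toContinuousLinearMap (dotProductBilin ℝ ℝ fun i => (u i : ℝ))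
  let ℓ : (Fin d → ℤ) →+ ℝ := AddMonoidHom.mk' (fun y => L (ic y)) fun a b => by simp [ic_add]
  have hx1 : L (ic x) = 1 := huF _ (intrinsicInterior_subset hx)
  have hneg : ∀ y ∈ latticePts P, -y ∈ latticePts P := fun _ => neg_mem_latticePts hsym
  have hle (y) (hy : y ∈ latticePts P) : ℓ y ≤ 1 := huP _ hy
  have hstep (y) (hy : y ∈ latticePts P) (hy1 : ℓ y ≠ 1) : y + x ∈ latticePts P :=
    add_mem_latticePts_of_notMem_facet hpoly.convex hsym
      (ic_mem_interior_iff_of_relintLatticePts_eq hdim hint) hcard hF.1 hfacet hx hy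
      fun hyF => hy1 (huF _ hyF)
  have hF1 : latticePts F = {y ∈ latticePts P | ℓ y = 1} := by
    rw [hF.1.eq_sep_apply_eq_of_finrank_vectorSpan (by rw [hfacet, finrank_fin_fun]) hx (f := L)
      (fun h => by simp [h] at hx1) (hx1 ▸ huP), hx1]
    rfl
  have hdisj {s t : ℝ} (h : s ≠ t) :
      Disjoint {y ∈ latticePts P | ℓ y = s} {y ∈ latticePts P | ℓ y = t} :=
    Set.disjoint_left.2 fun y h₁ h₂ => h (h₁.2.symm.trans h₂.2)
  have hFneg : -latticePts F = {y ∈ latticePts P | ℓ y = -1} := hF1 ▸ neg_sep_apply_eq hneg 1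
  rw [show {y ∈ latticePts P | ∑ i, (u i : ℝ) * (y i : ℝ) = 0} = {y ∈ latticePts P | ℓ y = 0}
    from rfl, hFneg, hF1]
  refine ⟨eq_union_sep_apply_eq hneg hle hx1 hstep, hdisj (by norm_num), hdisj (by norm_num),
    hdisj (by norm_num), by simpa only [neg_add_cancel] using
      bijOn_add_sep_apply_eq hneg hx1 hstep (t := -1) (by norm_num) (by norm_num),
    by simpa only [zero_add] using
      bijOn_add_sep_apply_eq hneg hx1 hstep (t := 0) (by norm_num) (by norm_num),
    fun p hp => ?_⟩
  obtain ⟨z, rfl⟩ := hpoly.exists_ic_eq_of_mem_extremePoints hp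
  have hz : z ∈ latticePts P := (extremePoints_subset hp : ic z ∈ P)
  refine ⟨⟨z, rfl⟩, ?_⟩
  rcases apply_eq_one_or_eq_neg_one_of_ic_mem_extremePoints hneg hle hx1 hstep hp with h | h
  exacts [Or.inl (hF1.ge ⟨hz, h⟩), Or.inr (ic_neg z ▸ hFneg.ge ⟨hz, h⟩)]

/-- Let `P` be a `d`-dimensional (`d ≥ 2`) centrally-symmetric lattice polytope with
    `P°_ℤ = {0}` and `|P_ℤ| = 3^d`, let `F` be a facet of `P` with a lattice point `x`
    in its relative interior, and let `u_F` be the rational outer normal of `F` with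
    `u_F(F) = {1}` and `u_F(P) ≤ 1`.  Then `P_ℤ` is the disjoint union of `F_ℤ`,
    `P_ℤ ∩ u_F^⊥` and `−F_ℤ`; translation by `x` induces bijections
    `−F_ℤ → P_ℤ ∩ u_F^⊥ → F_ℤ`; and every vertex of `P` lies in `F_ℤ ∪ (−F_ℤ)`. -/
theorem facet_layer_structure {d : ℕ} (hd : 2 ≤ d) (P : Set (Fin d → ℝ))
    (hpoly : IsLatticePolytope P) (hdim : affineSpan ℝ P = ⊤)
    (hsym : P = -P) (hint : relintLatticePts P = {0})
    (hcard : (latticePts P).ncard = 3 ^ d)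
    (F : Set (Fin d → ℝ)) (hF : IsFaceOf P F)
    (hfacet : Module.finrank ℝ (vectorSpan ℝ F) = d - 1)
    (x : Fin d → ℤ) (hx : ic x ∈ intrinsicInterior ℝ F)
    (u : Fin d → ℚ)
    (huF : ∀ p ∈ F, ∑ i, (u i : ℝ) * p i = 1)
    (huP : ∀ p ∈ P, ∑ i, (u i : ℝ) * p i ≤ 1) :
    latticePts P =
        latticePts F ∪ {y ∈ latticePts P | ∑ i, (u i : ℝ) * (y i : ℝ) = 0} ∪
          (-(latticePts F)) ∧
    Disjoint (latticePts F) {y ∈ latticePts P | ∑ i, (u i : ℝ) * (y i : ℝ) = 0} ∧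
    Disjoint {y ∈ latticePts P | ∑ i, (u i : ℝ) * (y i : ℝ) = 0} (-(latticePts F)) ∧
    Disjoint (latticePts F) (-(latticePts F)) ∧
    Set.BijOn (fun y => x + y) (-(latticePts F))
      {y ∈ latticePts P | ∑ i, (u i : ℝ) * (y i : ℝ) = 0} ∧
    Set.BijOn (fun y => x + y)
      {y ∈ latticePts P | ∑ i, (u i : ℝ) * (y i : ℝ) = 0} (latticePts F) ∧
    ∀ p ∈ Set.extremePoints ℝ P, (∃ z : Fin d → ℤ, ic z = p) ∧ (p ∈ F ∨ -p ∈ F) :=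
  facet_layer_structure_general P hpoly hdim hsym hint hcard F hF hfacet x hx u huF huP
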